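/- Let S be a finite sequence over a 3-letter alphabet that avoids repetitions of length at most 6. If S has three consecutive gaps g_1, g_2, g_3 (between four consecutive peaks) with g_1 ≥ g_2 and g_2 ≤ g_3, then S contains a block of consecutive entries that is equivalent (up to a permutation of the three letters) to one of the sequences CBABCBA, ACBABCACBA, or BACBABCABACBA. -/

import Mathlib

/-!
Over three letters with no square `aa`, each entry is determined by the two before it and by
whether the middle one is a peak: at a peak it repeats the earlier letter, elsewhere it is the
third letter. The squares `abab` and `abcabc` force the two middle peaks to be `d ∈ {2, 3, 4}`
apart. Since the outer gaps are at least as long, the `3d + 1` entries from `d` before the first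
middle peak to `d` after the second contain no other peak, so up to renaming the letters they are
fixed by `d`: they form the pattern of length `3d + 1`.
-/

/-- A sequence `s` of length `n` avoids repetitions of length at most 6 if no block of
`2l` consecutive entries with `1 ≤ l ≤ 3` forms a repetition. -/
def AvoidsShortReps (n : ℕ) (s : ℕ → Fin 3) : Prop :=
  ∀ start l : ℕ, 1 ≤ l → l ≤ 3 → start + 2 * l ≤ n →
    ¬ (∀ i, i < l → s (start + i) = s (start + l + i))

/-- A position `p` of a sequence of length `n` is a peak if it is the first or the last
position, or its two neighboring entries are equal. -/
def IsPeak (n : ℕ) (s : ℕ → Fin 3) (p : ℕ) : Prop :=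
  p < n ∧ (p = 0 ∨ p = n - 1 ∨ s (p - 1) = s (p + 1))

/-- `p` and `q` are consecutive peaks (with `p < q` and no peak strictly in between);
the gap between them is `q - p - 1`. -/
def ConsecutivePeaks (n : ℕ) (s : ℕ → Fin 3) (p q : ℕ) : Prop :=
  IsPeak n s p ∧ IsPeak n s q ∧ p < q ∧ ∀ r, p < r → r < q → ¬ IsPeak n s r

/-- `s` (of length `n`) contains a block of consecutive entries equal, up to a
permutation of the three letters, to the given pattern. -/
def MatchesPattern (n : ℕ) (s : ℕ → Fin 3) (pat : List (Fin 3)) : Prop :=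
  ∃ start : ℕ, ∃ σ : Equiv.Perm (Fin 3), start + pat.length ≤ n ∧
    ∀ i, (hi : i < pat.length) → s (start + i) = σ (pat.get ⟨i, hi⟩)

/-- With `A = 0`, `B = 1`, `C = 2`: the pattern `CBABCBA`. -/
def pat1 : List (Fin 3) := [2, 1, 0, 1, 2, 1, 0]

/-- With `A = 0`, `B = 1`, `C = 2`: the pattern `ACBABCACBA`. -/
def pat2 : List (Fin 3) := [0, 2, 1, 0, 1, 2, 0, 2, 1, 0]

/-- With `A = 0`, `B = 1`, `C = 2`: the pattern `BACBABCABACBA`. -/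
def pat3 : List (Fin 3) := [1, 0, 2, 1, 0, 1, 2, 0, 1, 0, 2, 1, 0]

lemma fin_three_eq_of_ne {a b c d : Fin 3} (hab : a ≠ b) (hbc : b ≠ c) (hcd : c ≠ d)
    (hac : a ≠ c) (hbd : b ≠ d) : a = d := by
  revert a b c d; decide

lemma fin_three_eq_of_ne_iff {x y z z' : Fin 3} (hxy : x ≠ y) (hyz : y ≠ z) (hyz' : y ≠ z')
    (hxz : x = z ↔ x = z') : z = z' := by
  revert x y z z'; decide

lemma exists_perm_fin_three {a b c d : Fin 3} (hab : a ≠ b) (hcd : c ≠ d) :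
    ∃ σ : Equiv.Perm (Fin 3), σ a = c ∧ σ b = d := by
  revert a b c d; decide

/-- `u` has distinct adjacent entries on `[0, m)`, and `P` holds exactly at its peaks strictly
inside `[0, m)`. -/
def HasPeakSet (u : ℕ → Fin 3) (m : ℕ) (P : ℕ → Prop) : Prop :=
  (∀ i, i + 1 < m → u i ≠ u (i + 1)) ∧ ∀ i, i + 2 < m → (u i = u (i + 2) ↔ P (i + 1))

namespace HasPeakSet

variable {u v : ℕ → Fin 3} {m : ℕ} {P : ℕ → Prop}

lemma of_forall_lt_sub
    (h : (∀ i < m - 1, u i ≠ u (i + 1)) ∧ ∀ i < m - 2, (u i = u (i + 2) ↔ P (i + 1))) :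
    HasPeakSet u m P :=
  ⟨fun i hi => h.1 i (by omega), fun i hi => h.2 i (by omega)⟩

lemma perm_comp (hu : HasPeakSet u m P) (σ : Equiv.Perm (Fin 3)) :
    HasPeakSet (fun i => σ (u i)) m P :=
  ⟨fun i hi => σ.injective.ne (hu.1 i hi), fun i hi => σ.injective.eq_iff.trans (hu.2 i hi)⟩

lemma unique (hu : HasPeakSet u m P) (hv : HasPeakSet v m P) (h₀ : u 0 = v 0)
    (h₁ : u 1 = v 1) : ∀ i < m, u i = v i := by
  have two_step : ∀ i, i + 1 < m → u i = v i ∧ u (i + 1) = v (i + 1) := by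
    intro i
    induction i with
    | zero => exact fun _ => ⟨h₀, h₁⟩
    | succ i ih =>
      intro hi
      obtain ⟨hi₀, hi₁⟩ := ih (by omega)
      refine ⟨hi₁, fin_three_eq_of_ne_iff (hu.1 i (by omega)) (hu.1 (i + 1) hi) ?_ ?_⟩
      · rw [hi₁]; exact hv.1 (i + 1) hi
      · rw [hu.2 i hi, hi₀, hv.2 i hi]
  intro i hi
  rcases i with _ | i
  · exact h₀
  · exact (two_step i hi).2

end HasPeakSet

lemma matchesPattern_of_hasPeakSet {n q : ℕ} {s : ℕ → Fin 3} {pat : List (Fin 3)}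
    {P : ℕ → Prop} (hlen : 2 ≤ pat.length) (hn : q + pat.length ≤ n)
    (hs : HasPeakSet (fun i => s (q + i)) pat.length P)
    (hpat : HasPeakSet (fun i => pat.getD i 0) pat.length P) :
    MatchesPattern n s pat := by
  obtain ⟨σ, hσ₀, hσ₁⟩ := exists_perm_fin_three (hpat.1 0 hlen) (hs.1 0 hlen)
  have heq := (hpat.perm_comp σ).unique hs hσ₀ hσ₁
  refine ⟨q, σ, hn, fun i hi => ?_⟩
  rw [← heq i hi, List.getD_eq_getElem _ _ hi, List.get_eq_getElem]

lemma hasPeakSet_pat1 :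
    HasPeakSet (fun i => pat1.getD i 0) (3 * 2 + 1) (fun j => j = 2 ∨ j = 2 * 2) :=
  HasPeakSet.of_forall_lt_sub (by decide)

lemma hasPeakSet_pat2 :
    HasPeakSet (fun i => pat2.getD i 0) (3 * 3 + 1) (fun j => j = 3 ∨ j = 2 * 3) :=
  HasPeakSet.of_forall_lt_sub (by decide)

lemma hasPeakSet_pat3 :
    HasPeakSet (fun i => pat3.getD i 0) (3 * 4 + 1) (fun j => j = 4 ∨ j = 2 * 4) :=
  HasPeakSet.of_forall_lt_sub (by decide)

section Peaks

variable {n : ℕ} {s : ℕ → Fin 3}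

lemma AvoidsShortReps.ne_succ (h : AvoidsShortReps n s) {x : ℕ} (hx : x + 2 ≤ n) :
    s x ≠ s (x + 1) := fun heq =>
  h x 1 le_rfl (by norm_num) hx fun i hi => by obtain rfl : i = 0 := (by omega); simpa using heq

lemma IsPeak.neighbors_eq {p r : ℕ} (hp : IsPeak n s p) (hr : r + 1 = p) (hn : p + 1 < n) :
    s r = s (r + 2) := by
  obtain ⟨-, h₀ | hlast | heq⟩ := hp
  · omega
  · omega
  · rwa [show p - 1 = r by omega, show p + 1 = r + 2 by omega] at heq

lemma ConsecutivePeaks.neighbors_ne {p q r : ℕ} (hpq : ConsecutivePeaks n s p q) (hpr : p ≤ r)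
    (hrq : r + 2 ≤ q) : s r ≠ s (r + 2) := fun heq =>
  hpq.2.2.2 (r + 1) (by omega) (by omega)
    ⟨by have := hpq.2.1.1; omega, Or.inr (Or.inr (by simpa using heq))⟩

lemma AvoidsShortReps.add_two_le (h : AvoidsShortReps n s) {p q : ℕ}
    (hpq : ConsecutivePeaks n s p q) (hp : 0 < p) (hq : q + 2 ≤ n) : p + 2 ≤ q := by
  by_contra! hlt
  obtain rfl : q = p + 1 := by have := hpq.2.2.1; omega
  obtain ⟨r, rfl⟩ : ∃ r, p = r + 1 := ⟨p - 1, by omega⟩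
  refine h r 2 (by norm_num) (by norm_num) (by omega) fun i hi => ?_
  obtain rfl | rfl : i = 0 ∨ i = 1 := by omega
  · exact hpq.1.neighbors_eq rfl (by omega)
  · exact hpq.2.1.neighbors_eq rfl (by omega)

lemma AvoidsShortReps.le_add_four (h : AvoidsShortReps n s) {p q : ℕ}
    (hpq : ConsecutivePeaks n s p q) : q ≤ p + 4 := by
  by_contra hq
  have hn := hpq.2.1.1
  have period : ∀ i, i < 3 → s (p + i) = s (p + 3 + i) := by
    intro i hi
    have h₁ : s (p + i) ≠ s (p + i + 1) := h.ne_succ (by omega)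
    have h₂ : s (p + i + 1) ≠ s (p + i + 2) := h.ne_succ (by omega)
    have h₃ : s (p + i + 2) ≠ s (p + 3 + i) := by
      rw [show p + 3 + i = p + i + 2 + 1 by omega]; exact h.ne_succ (by omega)
    have h₄ : s (p + i) ≠ s (p + i + 2) := hpq.neighbors_ne (by omega) (by omega)
    have h₅ : s (p + i + 1) ≠ s (p + 3 + i) := by
      rw [show p + 3 + i = p + i + 1 + 2 by omega]; exact hpq.neighbors_ne (by omega) (by omega)
    exact fin_three_eq_of_ne h₁ h₂ h₃ h₄ h₅
  exact h p 3 (by norm_num) le_rfl (by omega) period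

lemma hasPeakSet_between_peaks (h : AvoidsShortReps n s) {p₀ p₃ q k : ℕ}
    (h01 : ConsecutivePeaks n s p₀ (q + k)) (h12 : ConsecutivePeaks n s (q + k) (q + 2 * k))
    (h23 : ConsecutivePeaks n s (q + 2 * k) p₃) (hq : p₀ ≤ q) (hk : q + 3 * k ≤ p₃) :
    HasPeakSet (fun i => s (q + i)) (3 * k + 1) (fun j => j = k ∨ j = 2 * k) := by
  have hn := h23.2.1.1
  refine ⟨fun i hi => h.ne_succ (by omega), fun i hi => ?_⟩
  by_cases hP : i + 1 = k ∨ i + 1 = 2 * k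
  · simp only [hP, iff_true]
    rcases hP with hP | hP
    · exact h12.1.neighbors_eq (by omega) (by omega)
    · exact h23.1.neighbors_eq (by omega) (by omega)
  · simp only [hP, iff_false]
    obtain hi | hi | hi : i + 2 ≤ k ∨ (k ≤ i ∧ i + 2 ≤ 2 * k) ∨ 2 * k ≤ i := by omega
    · exact h01.neighbors_ne (by omega) (by omega)
    · exact h12.neighbors_ne (by omega) (by omega)
    · exact h23.neighbors_ne (by omega) (by omega)

end Peaks

/-- If a sequence over 3 letters avoiding repetitions of length at most 6 has three
consecutive gaps `g₁ ≥ g₂ ≤ g₃` (between four consecutive peaks), then it contains a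
block equivalent to `CBABCBA`, `ACBABCACBA` or `BACBABCABACBA`. -/
theorem stmt_10 (n : ℕ) (s : ℕ → Fin 3) (h : AvoidsShortReps n s)
    (p₀ p₁ p₂ p₃ : ℕ)
    (h01 : ConsecutivePeaks n s p₀ p₁) (h12 : ConsecutivePeaks n s p₁ p₂)
    (h23 : ConsecutivePeaks n s p₂ p₃)
    (hg1 : p₂ - p₁ - 1 ≤ p₁ - p₀ - 1) (hg3 : p₂ - p₁ - 1 ≤ p₃ - p₂ - 1) :
    MatchesPattern n s pat1 ∨ MatchesPattern n s pat2 ∨ MatchesPattern n s pat3 := by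
  have hn : p₃ < n := h23.2.1.1
  have hp₀₁ : p₀ < p₁ := h01.2.2.1
  have hp₂₃ : p₂ < p₃ := h23.2.2.1
  have hlo : p₁ + 2 ≤ p₂ := h.add_two_le h12 (by omega) (by omega)
  have hhi : p₂ ≤ p₁ + 4 := h.le_add_four h12
  obtain ⟨k, q, rfl, rfl, hq, hk⟩ :
      ∃ k q, p₁ = q + k ∧ p₂ = q + 2 * k ∧ p₀ ≤ q ∧ q + 3 * k ≤ p₃ :=
    ⟨p₂ - p₁, p₁ - (p₂ - p₁), by omega, by omega, by omega, by omega⟩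
  have hwin := hasPeakSet_between_peaks h h01 h12 h23 hq hk
  have hlen : q + (3 * k + 1) ≤ n := by omega
  obtain rfl | rfl | rfl : k = 2 ∨ k = 3 ∨ k = 4 := by omega
  · exact Or.inl (matchesPattern_of_hasPeakSet (by decide) hlen hwin hasPeakSet_pat1)
  · exact Or.inr (Or.inl (matchesPattern_of_hasPeakSet (by decide) hlen hwin hasPeakSet_pat2))
  · exact Or.inr (Or.inr (matchesPattern_of_hasPeakSet (by decide) hlen hwin hasPeakSet_pat3))
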